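/- For every X ∈ ℂ and every a ∈ ℂ^m, conj(Φ₀(X, a)) = Φ₀(conj(X), conj(a)), where conj(a) := (conj(a₁), …, conj(a_m)). -/

import Mathlib

open Complex Filter Real

noncomputable section

/-- The point `r e^{iθ}` in the complex plane. -/
def rayPt (r θ : ℝ) : ℂ := (r : ℂ) * Complex.exp (θ * Complex.I)

/-- The branch `X^s := exp(s(log r + iθ))` for `X = r e^{iθ}`. -/
def rayPow (r θ : ℝ) (s : ℂ) : ℂ := Complex.exp (s * ((Real.log r : ℂ) + θ * Complex.I))

/-- `ω := exp(2πi/(m+2))`. -/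
def om (m : ℕ) : ℂ := Complex.exp (2 * Real.pi * Complex.I / (m + 2))

/-- `ω^s := exp((2πi/(m+2)) s)`. -/
def omPow (m : ℕ) (s : ℂ) : ℂ := Complex.exp ((2 * Real.pi * Complex.I / (m + 2)) * s)

/-- The coefficients `b_n(a)` of the formal square root of `1 + a₁ x + ⋯ + a_m x^m`:
`b₀ = 1`, `b_n = (1/2)(a_n - ∑_{i=1}^{n-1} b_i b_{n-i})` (with `a_k = 0` for `k > m`). -/
def bcoef (m : ℕ) (a : Fin m → ℂ) : ℕ → ℂ
  | 0 => 1
  | n + 1 => (1 / 2) * ((if h : n < m then a ⟨n, h⟩ else 0) -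
      ∑ i ∈ (Finset.Ico 1 (n + 1)).attach,
        bcoef m a i.1 * bcoef m a (n + 1 - i.1))
decreasing_by
  all_goals
    have h1 := (Finset.mem_Ico.mp i.2).1
    have h2 := (Finset.mem_Ico.mp i.2).2
    omega

/-- `r_m(a) := -m/4` for odd `m`, `-m/4 - b_{1+m/2}(a)` for even `m`. -/
def rmC (m : ℕ) (a : Fin m → ℂ) : ℂ :=
  if m % 2 = 1 then -(m : ℂ) / 4 else -(m : ℂ) / 4 - bcoef m a (1 + m / 2)

/-- `S(X, a) = ∑_{k=0}^{⌊(m+1)/2⌋} (2 b_k(a)/(m+2-2k)) X^{(m+2-2k)/2}` at `X = r e^{iθ}`. -/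
def Sfun (m : ℕ) (a : Fin m → ℂ) (r θ : ℝ) : ℂ :=
  ∑ k ∈ Finset.range ((m + 1) / 2 + 1),
    (2 * bcoef m a k / ((m : ℂ) + 2 - 2 * (k : ℂ))) * rayPow r θ (((m : ℂ) + 2 - 2 * (k : ℂ)) / 2)

/-- The potential `X^m + a₁ X^{m-1} + ⋯ + a_m`. -/
def pot (m : ℕ) (a : Fin m → ℂ) (X : ℂ) : ℂ :=
  X ^ m + ∑ k : Fin m, a k * X ^ (m - 1 - (k : ℕ))

/-- `ω_k(a) := (ω^k a₁, ω^{2k} a₂, …, ω^{km} a_m)`. -/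
def omAct (m : ℕ) (k : ℤ) (a : Fin m → ℂ) : Fin m → ℂ :=
  fun j => om m ^ (k * (((j : ℕ) : ℤ) + 1)) * a j

/-- Sibuya's asymptotic characterization of the canonical solution of
`-Φ'' + (X^m + a₁X^{m-1} + ⋯ + a_m)Φ = 0`:
`Φ(re^{iθ}) (re^{iθ})^{-r_m(a)} e^{S(re^{iθ},a)} → 1` for every `|θ| < 3π/(m+2)`. -/
def SibAsymp (m : ℕ) (a : Fin m → ℂ) (Φ : ℂ → ℂ) : Prop :=
  ∀ θ : ℝ, |θ| < 3 * Real.pi / (m + 2) →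
    Filter.Tendsto
      (fun r : ℝ => Φ (rayPt r θ) * rayPow r θ (-(rmC m a)) * Complex.exp (Sfun m a r θ))
      Filter.atTop (nhds 1)

open Topology ComplexConjugate

/-!
Both `Φ₀(·, a)` and `Ψ(X) := conj Φ₀(conj X, conj a)` are entire solutions of `(★a)` whose
product with the gauge `E(r) = r^{-r_m(a)} e^{S(r, a)}` tends to `1` along the positive real axis
(for `Ψ` because `b_n`, `r_m` and `S` commute with conjugation of `a` when `X = r > 0`).
Since `|E|` grows faster than any power of `r`, both solutions decay faster than any power on
the ray; the equation then bounds their second derivatives, and a Taylor estimate on `[r, r + 1]`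
shows that their first derivatives tend to `0` as well. Hence their Wronskian, which is constant,
vanishes, so `Φ₀(·, a) = c Ψ` by the identity theorem, and comparing asymptotics gives `c = 1`.
-/

theorem norm_add_one_sub_sub_deriv_le {E : Type*} [NormedAddCommGroup E] [NormedSpace ℝ E]
    {f f' f'' : ℝ → E} (hf : ∀ x, HasDerivAt f (f' x) x) (hf' : ∀ x, HasDerivAt f' (f'' x) x)
    {a M : ℝ} (hM : ∀ x ∈ Set.Icc a (a + 1), ‖f'' x‖ ≤ M) :
    ‖f (a + 1) - f a - f' a‖ ≤ M := by
  have hM0 : 0 ≤ M := (norm_nonneg _).trans (hM a ⟨le_rfl, by linarith⟩)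
  have hlip : ∀ x ∈ Set.Icc a (a + 1), ‖f' x - f' a‖ ≤ M := fun x hx => by
    have := (convex_Icc a (a + 1)).norm_image_sub_le_of_norm_hasDerivWithin_le
      (fun y _ => (hf' y).hasDerivWithinAt) hM ⟨le_rfl, by linarith⟩ hx
    rw [Real.norm_of_nonneg (by linarith [hx.1])] at this
    nlinarith [hx.2]
  have key := (convex_Icc a (a + 1)).norm_image_sub_le_of_norm_hasDerivWithin_le
    (f := fun x => f x - x • f' a)
    (fun y _ => ((hf y).sub ((hasDerivAt_id y).smul_const (f' a))).hasDerivWithinAt)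
    (by simpa using hlip) ⟨le_rfl, by linarith⟩ ⟨by linarith, le_rfl⟩
  convert key using 2
  · rw [add_smul, one_smul]; abel
  · simp

theorem tendsto_deriv_atTop_zero_of_deriv2 {E : Type*} [NormedAddCommGroup E] [NormedSpace ℝ E]
    {f f' f'' : ℝ → E} (hf : ∀ x, HasDerivAt f (f' x) x) (hf' : ∀ x, HasDerivAt f' (f'' x) x)
    (h0 : Tendsto f atTop (𝓝 0)) (h2 : Tendsto f'' atTop (𝓝 0)) :
    Tendsto f' atTop (𝓝 0) := by
  rw [Metric.tendsto_atTop] at h0 h2 ⊢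
  intro ε hε
  obtain ⟨N₀, hN₀⟩ := h0 (ε / 3) (by positivity)
  obtain ⟨N₂, hN₂⟩ := h2 (ε / 3) (by positivity)
  refine ⟨max N₀ N₂, fun a ha => ?_⟩
  have ha₀ : N₀ ≤ a := le_of_max_le_left ha
  have ha₂ : N₂ ≤ a := le_of_max_le_right ha
  simp only [dist_zero_right] at hN₀ hN₂ ⊢
  have htaylor := norm_add_one_sub_sub_deriv_le hf hf' (a := a) (M := ε / 3)
    fun x hx => (hN₂ x (ha₂.trans hx.1)).le
  have hfa₁ := hN₀ (a + 1) (by linarith)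
  have hfa := hN₀ a ha₀
  calc ‖f' a‖ = ‖f (a + 1) - f a - (f (a + 1) - f a - f' a)‖ := by congr 1; abel
    _ ≤ ‖f (a + 1)‖ + ‖f a‖ + ‖f (a + 1) - f a - f' a‖ :=
      (norm_sub_le _ _).trans (by gcongr; exact norm_sub_le _ _)
    _ < ε := by linarith

theorem isLittleO_rpow_sub_rpow_atTop {q s : ℝ} (hs : 0 < s) :
    (fun r : ℝ => r ^ (q - s)) =o[atTop] fun r => r ^ q := by
  have h : (fun r : ℝ => r ^ (-s)) =o[atTop] fun _ => (1 : ℝ) :=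
    (Asymptotics.isLittleO_one_iff ℝ).2 (tendsto_rpow_neg_atTop hs)
  refine ((h.mul_isBigO (Asymptotics.isBigO_refl (fun r : ℝ => r ^ q) atTop)).congr' ?_ ?_)
  · filter_upwards [eventually_gt_atTop 0] with r hr
    rw [sub_eq_neg_add, Real.rpow_add hr]
  · simp

theorem tendsto_mul_log_add_sum_rpow_atTop {q β : ℝ} (hq : 0 < q) (K : ℕ) {γ : ℕ → ℝ}
    (hγ : 0 < γ 0) :
    Tendsto (fun r : ℝ => β * Real.log r + ∑ k ∈ Finset.range (K + 1), γ k * r ^ (q - k))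
      atTop atTop := by
  have hlower : (fun r : ℝ => β * Real.log r + ∑ k ∈ Finset.range K, γ (k + 1) * r ^ (q - (k + 1)))
      =o[atTop] fun r => γ 0 * r ^ q := by
    refine Asymptotics.IsLittleO.trans_isBigO ?_ (Asymptotics.isBigO_self_const_mul hγ.ne' _ _)
    exact ((isLittleO_log_rpow_atTop hq).const_mul_left β).add <| Asymptotics.IsLittleO.fun_sum
      fun k _ => (isLittleO_rpow_sub_rpow_atTop (by positivity)).const_mul_left _
  have hlead : Tendsto (fun r : ℝ => γ 0 * r ^ q) atTop atTop :=
    (tendsto_rpow_atTop hq).const_mul_atTop hγ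
  refine (hlower.add_isEquivalent (Asymptotics.IsEquivalent.refl)).symm.tendsto_atTop hlead
    |>.congr fun r => ?_
  simp [Finset.sum_range_succ', add_assoc]

def wronskian (f g : ℂ → ℂ) (z : ℂ) : ℂ := f z * deriv g z - deriv f z * g z

theorem wronskian_eq_of_deriv_deriv_eq_mul {V f g : ℂ → ℂ} (hf : Differentiable ℂ f)
    (hg : Differentiable ℂ g) (hf₂ : ∀ z, deriv (deriv f) z = V z * f z)
    (hg₂ : ∀ z, deriv (deriv g) z = V z * g z) (z w : ℂ) :
    wronskian f g z = wronskian f g w := by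
  have hW : ∀ z, HasDerivAt (wronskian f g) 0 z := fun z =>
    (((hf z).hasDerivAt.mul (hg.deriv z).hasDerivAt).sub
      ((hf.deriv z).hasDerivAt.mul (hg z).hasDerivAt)).congr_deriv (by rw [hf₂, hg₂]; ring)
  exact is_const_of_deriv_eq_zero (fun z => (hW z).differentiableAt) (fun z => (hW z).deriv) z w

theorem exists_eq_const_mul_of_wronskian_eq_zero {f g : ℂ → ℂ} (hf : Differentiable ℂ f)
    (hg : Differentiable ℂ g) (hW : ∀ z, wronskian f g z = 0) {z₀ : ℂ} (hz₀ : g z₀ ≠ 0) :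
    ∃ c, f = fun z => c * g z := by
  obtain ⟨ε, hε, hball⟩ :=
    Metric.isOpen_iff.1 (hg.continuous.isOpen_preimage _ isOpen_compl_singleton) z₀ hz₀
  have hquot : ∀ z ∈ Metric.ball z₀ ε, HasDerivAt (fun z => f z / g z) 0 z := fun z hz =>
    ((hf z).hasDerivAt.div (hg z).hasDerivAt (hball hz)).congr_deriv <| by
      rw [← neg_sub, ← wronskian, hW, neg_zero, zero_div]
  have hconst : ∀ z ∈ Metric.ball z₀ ε, f z / g z = f z₀ / g z₀ := fun z hz =>
    Metric.isOpen_ball.is_const_of_deriv_eq_zero (convex_ball z₀ ε).isPreconnected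
      (fun w hw => (hquot w hw).differentiableAt.differentiableWithinAt)
      (fun w hw => (hquot w hw).deriv) hz (Metric.mem_ball_self hε)
  refine ⟨f z₀ / g z₀, AnalyticOnNhd.eq_of_eventuallyEq (z₀ := z₀) (fun z _ => hf.analyticAt z)
    (fun z _ => (hg.const_mul _).analyticAt z) ?_⟩
  filter_upwards [Metric.ball_mem_nhds z₀ hε] with z hz
  rw [← hconst z hz, div_mul_cancel₀ _ (hball hz)]

theorem tendsto_deriv_ofReal_atTop_zero {V u : ℂ → ℂ} {N : ℕ} (hu : Differentiable ℂ u)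
    (hu₂ : ∀ z, deriv (deriv u) z = V z * u z)
    (hV : (fun r : ℝ => V r) =O[atTop] fun r => (r : ℂ) ^ N)
    (hdecay : ∀ n : ℕ, Tendsto (fun r : ℝ => (r : ℂ) ^ n * u r) atTop (𝓝 0)) :
    Tendsto (fun r : ℝ => deriv u r) atTop (𝓝 0) := by
  refine tendsto_deriv_atTop_zero_of_deriv2 (fun x => (hu x).hasDerivAt.comp_ofReal)
    (fun x => (hu.deriv x).hasDerivAt.comp_ofReal) (by simpa using hdecay 0) ?_
  simp_rw [hu₂]
  exact (hV.mul (Asymptotics.isBigO_refl (fun r : ℝ => u r) atTop)).trans_tendsto (hdecay N)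

theorem eq_of_deriv_deriv_eq_mul_of_tendsto_mul {V f g : ℂ → ℂ} {N : ℕ} {E : ℝ → ℂ}
    (hf : Differentiable ℂ f) (hg : Differentiable ℂ g)
    (hf₂ : ∀ z, deriv (deriv f) z = V z * f z) (hg₂ : ∀ z, deriv (deriv g) z = V z * g z)
    (hV : (fun r : ℝ => V r) =O[atTop] fun r => (r : ℂ) ^ N)
    (hE : ∀ n : ℕ, Tendsto (fun r : ℝ => (r : ℂ) ^ n / E r) atTop (𝓝 0))
    (hfE : Tendsto (fun r : ℝ => f r * E r) atTop (𝓝 1))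
    (hgE : Tendsto (fun r : ℝ => g r * E r) atTop (𝓝 1)) : f = g := by
  have hE₀ : ∀ᶠ r : ℝ in atTop, E r ≠ 0 :=
    (hfE.eventually_ne one_ne_zero).mono fun r hr => right_ne_zero_of_mul hr
  have hdecay : ∀ u : ℂ → ℂ, Tendsto (fun r : ℝ => u r * E r) atTop (𝓝 1) →
      ∀ n : ℕ, Tendsto (fun r : ℝ => (r : ℂ) ^ n * u r) atTop (𝓝 0) := fun u hu n => by
    refine (mul_zero (1 : ℂ) ▸ hu.mul (hE n)).congr' ?_
    filter_upwards [hE₀] with r hr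
    field_simp
  have hlim₀ : ∀ u : ℂ → ℂ, Tendsto (fun r : ℝ => u r * E r) atTop (𝓝 1) →
      Tendsto (fun r : ℝ => u r) atTop (𝓝 0) := fun u hu => by simpa using hdecay u hu 0
  have hW : ∀ z, wronskian f g z = 0 := fun z => by
    have hf' := tendsto_deriv_ofReal_atTop_zero hf hf₂ hV (hdecay f hfE)
    have hg' := tendsto_deriv_ofReal_atTop_zero hg hg₂ hV (hdecay g hgE)
    have hlim : Tendsto (fun r : ℝ => wronskian f g r) atTop (𝓝 0) := by
      simpa [wronskian] using ((hlim₀ f hfE).mul hg').sub (hf'.mul (hlim₀ g hgE))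
    simp_rw [wronskian_eq_of_deriv_deriv_eq_mul hf hg hf₂ hg₂ _ z] at hlim
    exact tendsto_nhds_unique tendsto_const_nhds hlim
  obtain ⟨r₀, hr₀⟩ :=
    ((hgE.eventually_ne one_ne_zero).mono fun r hr => left_ne_zero_of_mul hr).exists
  obtain ⟨c, rfl⟩ := exists_eq_const_mul_of_wronskian_eq_zero hf hg hW hr₀
  have hc : Tendsto (fun r : ℝ => c * g r * E r) atTop (𝓝 c) := by
    simpa [mul_assoc] using hgE.const_mul c
  simp only [tendsto_nhds_unique hc hfE, one_mul]

def sibuyaGauge (m : ℕ) (a : Fin m → ℂ) (r : ℝ) : ℂ :=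
  rayPow r 0 (-(rmC m a)) * Complex.exp (Sfun m a r 0)

theorem rayPow_zero_ofReal {r : ℝ} (hr : 0 < r) (x : ℝ) : rayPow r 0 x = ((r ^ x : ℝ) : ℂ) := by
  rw [rayPow, Real.rpow_def_of_pos hr, Complex.ofReal_exp]
  push_cast
  ring_nf

theorem norm_sibuyaGauge (m : ℕ) (a : Fin m → ℂ) {r : ℝ} (hr : 0 < r) :
    ‖sibuyaGauge m a r‖ = Real.exp ((-(rmC m a)).re * Real.log r +
      ∑ k ∈ Finset.range ((m + 1) / 2 + 1),
        (2 * bcoef m a k / ((m : ℂ) + 2 - 2 * (k : ℂ))).re * r ^ (((m : ℝ) + 2) / 2 - k)) := by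
  rw [sibuyaGauge, norm_mul, rayPow, Complex.norm_exp, Complex.norm_exp, Sfun, Complex.re_sum,
    Real.exp_add]
  congr 2
  · simp
  · refine Finset.sum_congr rfl fun k _ => ?_
    have hs : ((m : ℂ) + 2 - 2 * (k : ℂ)) / 2 = (((m : ℝ) + 2) / 2 - k : ℝ) := by push_cast; ring
    rw [hs, rayPow_zero_ofReal hr, Complex.re_mul_ofReal]

theorem tendsto_pow_div_sibuyaGauge (m : ℕ) (a : Fin m → ℂ) (n : ℕ) :
    Tendsto (fun r : ℝ => (r : ℂ) ^ n / sibuyaGauge m a r) atTop (𝓝 0) := by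
  have hexp := tendsto_mul_log_add_sum_rpow_atTop (q := ((m : ℝ) + 2) / 2)
    (β := (-(rmC m a)).re - n) (by positivity) ((m + 1) / 2)
    (γ := fun k => (2 * bcoef m a k / ((m : ℂ) + 2 - 2 * (k : ℂ))).re)
    (by
      simp only [bcoef]
      rw [show 2 * 1 / ((m : ℂ) + 2 - 2 * ((0 : ℕ) : ℂ)) = ((2 / ((m : ℝ) + 2) : ℝ) : ℂ) by
        push_cast; ring, Complex.ofReal_re]
      positivity)
  rw [tendsto_zero_iff_norm_tendsto_zero]
  refine (Real.tendsto_exp_neg_atTop_nhds_zero.comp hexp).congr' ?_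
  filter_upwards [eventually_gt_atTop 0] with r hr
  rw [Function.comp_apply, norm_div, norm_sibuyaGauge m a hr, norm_pow, Complex.norm_real,
    Real.norm_of_nonneg hr.le, ← Real.exp_log (pow_pos hr n), ← Real.exp_sub, Real.log_pow]
  congr 1
  ring

theorem isBigO_ofReal_pow_pow_atTop {i j : ℕ} (h : i ≤ j) :
    (fun r : ℝ => (r : ℂ) ^ i) =O[atTop] fun r => (r : ℂ) ^ j :=
  Asymptotics.IsBigO.of_bound 1 <| by
    filter_upwards [eventually_ge_atTop 1] with r hr
    simpa [Real.norm_of_nonneg (zero_le_one.trans hr)] using pow_le_pow_right₀ hr h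

theorem isBigO_pot (m : ℕ) (a : Fin m → ℂ) :
    (fun r : ℝ => pot m a r) =O[atTop] fun r => (r : ℂ) ^ m :=
  (Asymptotics.isBigO_refl _ _).add <| Asymptotics.IsBigO.fun_sum fun k _ =>
    (isBigO_ofReal_pow_pow_atTop (by omega)).const_mul_left (a k)

theorem bcoef_conj (m : ℕ) (a : Fin m → ℂ) (n : ℕ) :
    bcoef m (fun j => conj (a j)) n = conj (bcoef m a n) := by
  induction n using Nat.strong_induction_on with
  | _ n ih =>
    match n with
    | 0 => simp [bcoef]
    | n + 1 =>
      rw [bcoef, bcoef, map_mul, map_sub, map_sum]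
      congr 1
      · simp [map_ofNat]
      congr 1
      · split <;> simp
      · refine Finset.sum_congr rfl fun i _ => ?_
        have hi := Finset.mem_Ico.mp i.2
        rw [map_mul, ih i.1 (by omega), ih (n + 1 - i.1) (by omega)]

theorem rmC_conj (m : ℕ) (a : Fin m → ℂ) :
    rmC m (fun j => conj (a j)) = conj (rmC m a) := by
  unfold rmC
  split <;> simp [bcoef_conj, map_ofNat]

theorem pot_conj (m : ℕ) (a : Fin m → ℂ) (X : ℂ) :
    pot m (fun j => conj (a j)) (conj X) = conj (pot m a X) := by
  simp [pot, map_sum]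

theorem rayPow_zero_conj (r : ℝ) (s : ℂ) : rayPow r 0 (conj s) = conj (rayPow r 0 s) := by
  simp [rayPow, ← Complex.exp_conj]

theorem Sfun_zero_conj (m : ℕ) (a : Fin m → ℂ) (r : ℝ) :
    Sfun m (fun j => conj (a j)) r 0 = conj (Sfun m a r 0) := by
  simp_rw [Sfun, map_sum, map_mul, map_div₀, ← rayPow_zero_conj, bcoef_conj]
  simp [map_ofNat]

theorem sibuyaGauge_conj (m : ℕ) (a : Fin m → ℂ) (r : ℝ) :
    sibuyaGauge m (fun j => conj (a j)) r = conj (sibuyaGauge m a r) := by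
  rw [sibuyaGauge, sibuyaGauge, map_mul, ← rayPow_zero_conj, ← Complex.exp_conj, rmC_conj,
    Sfun_zero_conj, map_neg]

theorem SibAsymp.tendsto_mul_sibuyaGauge {m : ℕ} {a : Fin m → ℂ} {Φ : ℂ → ℂ}
    (h : SibAsymp m a Φ) : Tendsto (fun r : ℝ => Φ r * sibuyaGauge m a r) atTop (𝓝 1) := by
  refine (h 0 (by rw [abs_zero]; positivity)).congr fun r => ?_
  simp [rayPt, sibuyaGauge, mul_assoc]

theorem stmt4_general (m : ℕ)
    (Φ₀ : ℂ × (Fin m → ℂ) → ℂ)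
    (hent : Differentiable ℂ Φ₀)
    (hode : ∀ a : Fin m → ℂ, ∀ X : ℂ,
      -(deriv (deriv fun Y => Φ₀ (Y, a)) X) + pot m a X * Φ₀ (X, a) = 0)
    (hasym : ∀ a : Fin m → ℂ, SibAsymp m a fun X => Φ₀ (X, a))
    (X : ℂ) (a : Fin m → ℂ) :
    (starRingEnd ℂ) (Φ₀ (X, a)) =
      Φ₀ ((starRingEnd ℂ) X, fun j => (starRingEnd ℂ) (a j)) := by
  set a' : Fin m → ℂ := fun j => conj (a j)
  have hdiff : ∀ b, Differentiable ℂ fun Y => Φ₀ (Y, b) := fun b =>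
    hent.comp (differentiable_id.prodMk (differentiable_const b))
  have hode' : ∀ b Y, deriv (deriv fun Y => Φ₀ (Y, b)) Y = pot m b Y * Φ₀ (Y, b) := fun b Y => by
    linear_combination -hode b Y
  have key : (fun Y => Φ₀ (Y, a)) = conj ∘ (fun Y => Φ₀ (Y, a')) ∘ conj := by
    refine eq_of_deriv_deriv_eq_mul_of_tendsto_mul (hdiff a)
      (fun z => differentiableAt_conj_conj_iff.2 (hdiff a' _)) (hode' a) (fun z => ?_)
      (isBigO_pot m a) (tendsto_pow_div_sibuyaGauge m a) (hasym a).tendsto_mul_sibuyaGauge ?_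
    · simp [hode', a', pot_conj]
    · have := (Complex.continuous_conj.tendsto 1).comp (hasym a').tendsto_mul_sibuyaGauge
      simpa [Function.comp_def, sibuyaGauge_conj, a'] using this
  rw [congrFun key X]
  simp [a']

/-- the canonical Sibuya solution satisfies
`conj(Φ₀(X, a)) = Φ₀(conj X, conj a)`. -/
theorem stmt4 (m : ℕ) (hm : 1 ≤ m)
    (Φ₀ : ℂ × (Fin m → ℂ) → ℂ)
    (hent : Differentiable ℂ Φ₀)
    (hode : ∀ a : Fin m → ℂ, ∀ X : ℂ,
      -(deriv (deriv fun Y => Φ₀ (Y, a)) X) + pot m a X * Φ₀ (X, a) = 0)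
    (hasym : ∀ a : Fin m → ℂ, SibAsymp m a fun X => Φ₀ (X, a))
    (X : ℂ) (a : Fin m → ℂ) :
    (starRingEnd ℂ) (Φ₀ (X, a)) =
      Φ₀ ((starRingEnd ℂ) X, fun j => (starRingEnd ℂ) (a j)) :=
  stmt4_general m Φ₀ hent hode hasym X a
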